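/- arXiv:1612.09567 — 5 statements merged into one kernel-verified Lean document; each statement's English description precedes it below -/
import Mathlib

section
/- Let X be a connected, Hausdorff, locally path-connected topological space, let Γ be a discrete group acting on X freely and properly discontinuously, let G be a compact Hausdorff group, and let φ : Γ → G be a group homomorphism. Let Γ act on X × G diagonally, acting on X as given and on G by left translation via φ, and let G act on the quotient E := Γ\(X × G) by right translation in the second coordinate. Then E with this G-action is a locally trivial principal G-bundle over Y := Γ\X. -/
/-- The relation on `X × G` identifying `(x, g)` with `(γ·x, φ(γ)g)` for `γ ∈ Γ`,
where `Γ` acts on `X` and on `G` by left translation via `φ : Γ → G`. -/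
def BundleRel (X : Type*) {Γ : Type*} [Group Γ] [MulAction Γ X] {G : Type*} [Group G]
    (φ : Γ →* G) : X × G → X × G → Prop :=
  fun a b => ∃ γ : Γ, (γ • a.1, φ γ * a.2) = b

/-- The total space `E = Γ\(X × G)`. -/
def BundleTotal (X : Type*) {Γ : Type*} [Group Γ] [MulAction Γ X] {G : Type*} [Group G]
    (φ : Γ →* G) : Type _ :=
  Quot (BundleRel X φ)

instance BundleTotal.instTopologicalSpace (X : Type*) {Γ : Type*} [Group Γ] [MulAction Γ X]
    {G : Type*} [Group G] [TopologicalSpace X] [TopologicalSpace G] (φ : Γ →* G) :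
    TopologicalSpace (BundleTotal X φ) :=
  inferInstanceAs (TopologicalSpace (Quot _))

/-- The right `G`-action on `E = Γ\(X × G)` by right translation in the second coordinate. -/
def BundleAct {X Γ G : Type*} [Group Γ] [MulAction Γ X] [Group G] (φ : Γ →* G)
    (e : BundleTotal X φ) (g : G) : BundleTotal X φ :=
  Quot.lift (fun p => Quot.mk _ (p.1, p.2 * g))
    (by rintro a b ⟨γ, rfl⟩; exact Quot.sound ⟨γ, by simp [mul_assoc]⟩) e

/-- The orbit space `Y = Γ\X`, with the quotient topology. -/
def GammaQuot (X : Type*) (Γ : Type*) [Group Γ] [MulAction Γ X] : Type _ :=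
  Quot (fun a b : X => ∃ γ : Γ, γ • a = b)

instance GammaQuot.instTopologicalSpace (X : Type*) (Γ : Type*) [Group Γ] [MulAction Γ X]
    [TopologicalSpace X] : TopologicalSpace (GammaQuot X Γ) :=
  inferInstanceAs (TopologicalSpace (Quot _))

/-- The bundle projection `E = Γ\(X × G) → Y = Γ\X`. -/
def BundleProj (X : Type*) {Γ G : Type*} [Group Γ] [MulAction Γ X] [Group G] (φ : Γ →* G) :
    BundleTotal X φ → GammaQuot X Γ :=
  Quot.lift (fun p => Quot.mk _ p.1) (by rintro a b ⟨γ, rfl⟩; exact Quot.sound ⟨γ, rfl⟩)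

/-!
A slice `U ⊆ X` that no nontrivial `γ ∈ Γ` moves into itself maps homeomorphically onto an
open set `V ⊆ Γ\X`, because the orbit map is open and injective on `U`. For the same reason
`(u, g) ↦ [u, g]` is an open embedding of `U × G` into `E`, and since every point of `X × G`
over `V` is a `Γ`-translate of a point of `U × G`, its image is the whole preimage of `V`.
Right translation in `G` commutes with the left `Γ`-action, so the resulting trivialisation
is `G`-equivariant.
-/

open Topology

theorem isOpenMap_quot_mk_of_forall_isOpenMap {A ι : Type*} [TopologicalSpace A]
    (f : ι → A → A) (hf : ∀ i, IsOpenMap (f i)) (hr : Equivalence fun a b => ∃ i, f i a = b) :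
    IsOpenMap (Quot.mk fun a b => ∃ i, f i a = b) := by
  intro S hS
  have hsat : Quot.mk (fun a b => ∃ i, f i a = b) ⁻¹' (Quot.mk _ '' S) = ⋃ i, f i '' S := by
    ext b
    simp only [Set.mem_preimage, Set.mem_image, Set.mem_iUnion, Quot.eq, hr.eqvGen_iff]
    exact ⟨fun ⟨a, ha, i, hi⟩ => ⟨i, a, ha, hi⟩, fun ⟨i, a, ha, hi⟩ => ⟨a, ha, i, hi⟩⟩
  rw [← isQuotientMap_quot_mk.isOpen_preimage, hsat]
  exact isOpen_iUnion fun i => hf i S hS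

theorem eq_one_of_smul_mem_of_disjoint {X Γ : Type*} [Group Γ] [MulAction Γ X] {U : Set X}
    (hU : ∀ γ : Γ, γ ≠ 1 → Disjoint ((fun y : X => γ • y) '' U) U) {γ : Γ} {u : X}
    (hu : u ∈ U) (hγu : γ • u ∈ U) : γ = 1 := by
  by_contra hγ
  exact (hU γ hγ).le_bot ⟨⟨u, hu, rfl⟩, hγu⟩

section

variable {X Γ G : Type*} [Group Γ] [MulAction Γ X] [Group G]

namespace GammaQuot

variable (Γ) in
def mk (x : X) : GammaQuot X Γ := Quot.mk _ x

theorem equivalence_orbitRel : Equivalence fun a b : X => ∃ γ : Γ, γ • a = b :=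
  ⟨fun a => ⟨1, one_smul Γ a⟩, fun ⟨γ, h⟩ => ⟨γ⁻¹, by rw [← h, inv_smul_smul]⟩,
    fun ⟨γ, hγ⟩ ⟨δ, hδ⟩ => ⟨δ * γ, by rw [mul_smul, hγ, hδ]⟩⟩

theorem mk_eq_mk_iff {a b : X} : mk Γ a = mk Γ b ↔ ∃ γ : Γ, γ • a = b :=
  Quot.eq.trans equivalence_orbitRel.eqvGen_iff

theorem injOn_mk {U : Set X} (hU : ∀ γ : Γ, γ ≠ 1 → Disjoint ((fun y : X => γ • y) '' U) U) :
    U.InjOn (mk Γ) := by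
  intro u hu v hv huv
  obtain ⟨γ, rfl⟩ := mk_eq_mk_iff.1 huv
  rw [eq_one_of_smul_mem_of_disjoint hU hu hv, one_smul]

variable [TopologicalSpace X]

theorem isOpenMap_mk [ContinuousConstSMul Γ X] : IsOpenMap (mk Γ : X → GammaQuot X Γ) :=
  isOpenMap_quot_mk_of_forall_isOpenMap (fun γ : Γ => (γ • · : X → X)) isOpenMap_smul
    equivalence_orbitRel

noncomputable def homeomorphImage [ContinuousConstSMul Γ X] {U : Set X} (hUo : IsOpen U)
    (hU : ∀ γ : Γ, γ ≠ 1 → Disjoint ((fun y : X => γ • y) '' U) U) : U ≃ₜ mk Γ '' U :=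
  (IsOpenEmbedding.of_continuous_injective_isOpenMap
      (continuous_quot_mk.comp continuous_subtype_val) (injOn_mk hU).injective
      (isOpenMap_mk.comp hUo.isOpenMap_subtype_val)).toIsEmbedding.toHomeomorph.trans
    (Homeomorph.setCongr (Set.range_domRestrict _ _))

end GammaQuot

namespace BundleTotal

variable (φ : Γ →* G)

def mk (p : X × G) : BundleTotal X φ := Quot.mk _ p

theorem act_mk (p : X × G) (g : G) : BundleAct φ (mk φ p) g = mk φ (p.1, p.2 * g) :=
  rfl

theorem equivalence_bundleRel : Equivalence (BundleRel X φ) :=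
  ⟨fun a => ⟨1, by simp⟩, fun ⟨γ, h⟩ => ⟨γ⁻¹, by simp [← h]⟩,
    fun ⟨γ, hγ⟩ ⟨δ, hδ⟩ => ⟨δ * γ, by simp [← hγ, ← hδ, mul_smul, mul_assoc]⟩⟩

theorem mk_eq_mk_iff {a b : X × G} :
    mk φ a = mk φ b ↔ ∃ γ : Γ, γ • a.1 = b.1 ∧ φ γ * a.2 = b.2 :=
  (Quot.eq.trans (equivalence_bundleRel φ).eqvGen_iff).trans <| by simp only [BundleRel, Prod.ext_iff]

theorem eq_one_of_act_eq_self (hfree : ∀ (γ : Γ) (x : X), γ • x = x → γ = 1)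
    (e : BundleTotal X φ) (g : G) (he : BundleAct φ e g = e) : g = 1 := by
  induction e using Quot.ind with
  | mk p =>
    obtain ⟨γ, hγx, hγg⟩ := (mk_eq_mk_iff φ).1 he
    rw [hfree γ p.1 hγx, map_one, one_mul, mul_eq_left] at hγg
    exact hγg

theorem range_mk_restrict (U : Set X) :
    Set.range (fun p : U × G => mk φ ((p.1 : X), p.2)) =
      BundleProj X φ ⁻¹' (GammaQuot.mk Γ '' U) := by
  ext e
  induction e using Quot.ind with
  | mk p =>
    constructor
    · rintro ⟨⟨u, g⟩, he⟩
      rw [← he]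
      exact ⟨u, u.2, rfl⟩
    · rintro ⟨u, hu, hux⟩
      obtain ⟨γ, hγ⟩ := GammaQuot.mk_eq_mk_iff.1 hux
      exact ⟨(⟨u, hu⟩, (φ γ)⁻¹ * p.2), (mk_eq_mk_iff φ).2 ⟨γ, hγ, mul_inv_cancel_left _ _⟩⟩

variable [TopologicalSpace X] [TopologicalSpace G]

theorem continuous_proj : Continuous (BundleProj X φ) :=
  continuous_quot_lift _ (continuous_quot_mk.comp continuous_fst)

variable [ContinuousConstSMul Γ X] [ContinuousMul G]

theorem isOpenMap_mk : IsOpenMap (mk φ : X × G → BundleTotal X φ) :=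
  isOpenMap_quot_mk_of_forall_isOpenMap (fun γ (p : X × G) => (γ • p.1, φ γ * p.2))
    (fun γ => (isOpenMap_smul γ).prodMap (isOpenMap_mul_left (φ γ))) (equivalence_bundleRel φ)

theorem continuous_act : Continuous fun p : BundleTotal X φ × G => BundleAct φ p.1 p.2 := by
  have hq : IsOpenQuotientMap (mk φ : X × G → BundleTotal X φ) :=
    ⟨Quot.mk_surjective, continuous_quot_mk, isOpenMap_mk φ⟩
  refine (hq.prodMap IsOpenQuotientMap.id).continuous_comp_iff.mp ?_
  exact continuous_quot_mk.comp (continuous_fst.fst.prodMk (continuous_fst.snd.mul continuous_snd))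

variable {U : Set X} (hUo : IsOpen U)
  (hU : ∀ γ : Γ, γ ≠ 1 → Disjoint ((fun y : X => γ • y) '' U) U)

include hUo hU in
theorem isOpenEmbedding_mk_restrict :
    IsOpenEmbedding (fun p : U × G => mk φ ((p.1 : X), p.2)) := by
  refine .of_continuous_injective_isOpenMap
    (continuous_quot_mk.comp (continuous_subtype_val.prodMap continuous_id)) ?_
    ((isOpenMap_mk φ).comp (hUo.isOpenMap_subtype_val.prodMap IsOpenMap.id))
  rintro ⟨u, g⟩ ⟨v, h⟩ he
  obtain ⟨γ, hγu, hγg⟩ : ∃ γ : Γ, γ • (u : X) = v ∧ φ γ * g = h := (mk_eq_mk_iff φ).1 he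
  obtain rfl := eq_one_of_smul_mem_of_disjoint hU u.2 (hγu ▸ v.2)
  rw [one_smul] at hγu
  rw [map_one, one_mul] at hγg
  exact Prod.ext (Subtype.ext hγu) hγg

noncomputable def homeomorphSlice : U × G ≃ₜ BundleProj X φ ⁻¹' (GammaQuot.mk Γ '' U) :=
  (isOpenEmbedding_mk_restrict φ hUo hU).toIsEmbedding.toHomeomorph.trans
    (Homeomorph.setCongr (range_mk_restrict φ U))

theorem coe_homeomorphSlice (p : U × G) :
    (homeomorphSlice φ hUo hU p : BundleTotal X φ) = mk φ ((p.1 : X), p.2) :=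
  rfl

noncomputable def localTriv :
    BundleProj X φ ⁻¹' (GammaQuot.mk Γ '' U) ≃ₜ (GammaQuot.mk Γ '' U) × G :=
  (homeomorphSlice φ hUo hU).symm.trans
    ((GammaQuot.homeomorphImage hUo hU).prodCongr (Homeomorph.refl G))

theorem localTriv_act {a b : BundleProj X φ ⁻¹' (GammaQuot.mk Γ '' U)} {g : G}
    (hab : (b : BundleTotal X φ) = BundleAct φ a g) :
    localTriv φ hUo hU b = ((localTriv φ hUo hU a).1, (localTriv φ hUo hU a).2 * g) := by
  set q := (homeomorphSlice φ hUo hU).symm a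
  have hb : b = homeomorphSlice φ hUo hU (q.1, q.2 * g) := by
    rw [Subtype.ext_iff, hab, ← (homeomorphSlice φ hUo hU).apply_symm_apply a,
      coe_homeomorphSlice, act_mk, coe_homeomorphSlice]
  simp [localTriv, hb, q]

end BundleTotal

end

theorem bundleTotal_is_locally_trivial_principal_bundle_general
    (X : Type*) [TopologicalSpace X]
    (Γ : Type*) [Group Γ] [MulAction Γ X]
    (hΓcont : ∀ γ : Γ, Continuous fun x : X => γ • x)
    (hΓpd : ∀ x : X, ∃ U : Set X, IsOpen U ∧ x ∈ U ∧
      ∀ γ : Γ, γ ≠ 1 → Disjoint ((fun y : X => γ • y) '' U) U)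
    (G : Type*) [Group G] [TopologicalSpace G] [IsTopologicalGroup G] (φ : Γ →* G) :
    Continuous (fun p : BundleTotal X φ × G => BundleAct φ p.1 p.2) ∧
    (∀ (e : BundleTotal X φ) (g : G), BundleAct φ e g = e → g = 1) ∧
    Continuous (BundleProj X φ) ∧
    ∀ y : GammaQuot X Γ, ∃ U : Set (GammaQuot X Γ), IsOpen U ∧ y ∈ U ∧
      ∃ ψ : (BundleProj X φ ⁻¹' U : Set (BundleTotal X φ)) ≃ₜ U × G,
        ∀ (a b : (BundleProj X φ ⁻¹' U : Set (BundleTotal X φ))) (g : G),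
          (b : BundleTotal X φ) = BundleAct φ (a : BundleTotal X φ) g →
            ψ b = ((ψ a).1, (ψ a).2 * g) := by
  have : ContinuousConstSMul Γ X := ⟨hΓcont⟩
  have hfree (γ : Γ) (x : X) (hγx : γ • x = x) : γ = 1 := by
    obtain ⟨U, -, hxU, hU⟩ := hΓpd x
    exact eq_one_of_smul_mem_of_disjoint hU hxU (hγx.symm ▸ hxU)
  refine ⟨BundleTotal.continuous_act φ, BundleTotal.eq_one_of_act_eq_self φ hfree,
    BundleTotal.continuous_proj φ, ?_⟩
  rintro ⟨x⟩
  obtain ⟨U, hUo, hxU, hU⟩ := hΓpd x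
  exact ⟨GammaQuot.mk Γ '' U, GammaQuot.isOpenMap_mk U hUo, ⟨x, hxU, rfl⟩,
    BundleTotal.localTriv φ hUo hU, fun _ _ _ => BundleTotal.localTriv_act φ hUo hU⟩

/-- Let `X` be a connected, Hausdorff, locally path-connected space, let a
discrete group `Γ` act on `X` freely and properly discontinuously (by homeomorphisms), let
`G` be a compact Hausdorff topological group and `φ : Γ → G` a homomorphism. Let `Γ` act
diagonally on `X × G` (on `G` by left translation via `φ`), and let `G` act on the quotient
`E = Γ\(X × G)` by right translation in the second coordinate. Then `E` with this `G`-action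
is a locally trivial principal `G`-bundle over `Y = Γ\X`: the `G`-action is continuous and
free, the projection is continuous, and every point of `Y` has an open neighbourhood `U`
with a `G`-equivariant homeomorphism from its preimage in `E` onto `U × G` (with the right
translation action on the second factor). -/
theorem bundleTotal_is_locally_trivial_principal_bundle
    (X : Type*) [TopologicalSpace X] [ConnectedSpace X] [T2Space X] [LocallyPathConnectedSpace X]
    (Γ : Type*) [Group Γ] [MulAction Γ X]
    (hΓcont : ∀ γ : Γ, Continuous fun x : X => γ • x)
    (hΓfree : ∀ (γ : Γ) (x : X), γ • x = x → γ = 1)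
    (hΓpd : ∀ x : X, ∃ U : Set X, IsOpen U ∧ x ∈ U ∧
      ∀ γ : Γ, γ ≠ 1 → Disjoint ((fun y : X => γ • y) '' U) U)
    (G : Type*) [Group G] [TopologicalSpace G] [IsTopologicalGroup G] [CompactSpace G]
    [T2Space G] (φ : Γ →* G) :
    Continuous (fun p : BundleTotal X φ × G => BundleAct φ p.1 p.2) ∧
    (∀ (e : BundleTotal X φ) (g : G), BundleAct φ e g = e → g = 1) ∧
    Continuous (BundleProj X φ) ∧
    ∀ y : GammaQuot X Γ, ∃ U : Set (GammaQuot X Γ), IsOpen U ∧ y ∈ U ∧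
      ∃ ψ : (BundleProj X φ ⁻¹' U : Set (BundleTotal X φ)) ≃ₜ U × G,
        ∀ (a b : (BundleProj X φ ⁻¹' U : Set (BundleTotal X φ))) (g : G),
          (b : BundleTotal X φ) = BundleAct φ (a : BundleTotal X φ) g →
            ψ b = ((ψ a).1, (ψ a).2 * g) :=
  bundleTotal_is_locally_trivial_principal_bundle_general X Γ hΓcont hΓpd G φ
end

section
/- Let X be a connected, simply connected, Hausdorff, locally path-connected topological space, let Γ be a discrete group acting on X freely and properly discontinuously, let G be a compact Hausdorff group, and let φ : Γ → G be a group homomorphism such that the composite Γ → G → π₀(G) = G/G_a is injective. Then the principal G-bundle E = Γ\(X × G) over Y = Γ\X is incompressible: for every loop α : S¹ → Y that is not nullhomotopic, the pullback of E along α is a non-trivial principal G-bundle over S¹. -/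
/-- If `x` and `y` are joined by a path, so are their images under a continuous map. -/
theorem Joined.map' {X Y : Type*} [TopologicalSpace X] [TopologicalSpace Y] {x y : X}
    (h : Joined x y) {f : X → Y} (hf : Continuous f) : Joined (f x) (f y) :=
  ⟨h.somePath.map hf⟩

/-- `G_a`: the (not necessarily closed) normal subgroup of a topological group `G`
consisting of the elements that are path-connected to the identity. -/
def pathComponentSubgroup (G : Type*) [Group G] [TopologicalSpace G] [IsTopologicalGroup G] :
    Subgroup G where
  carrier := pathComponent (1 : G)
  one_mem' := mem_pathComponent_self 1
  mul_mem' := by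
    intro a b ha hb
    have h1 : Joined (1 : G) (a * b) :=
      hb.trans (by simpa using (Joined.map' ha (continuous_mul_right b)))
    exact h1
  inv_mem' := by
    intro a ha
    have h := Joined.map' ha continuous_inv
    simp only [inv_one] at h
    exact h

instance pathComponentSubgroup.normal (G : Type*) [Group G] [TopologicalSpace G]
    [IsTopologicalGroup G] : (pathComponentSubgroup G).Normal where
  conj_mem a ha g := by
    have : Continuous fun x : G => g * x * g⁻¹ :=
      (continuous_mul_right g⁻¹).comp (continuous_mul_left g)
    have h := Joined.map' ha this
    simp only [mul_one, mul_inv_cancel] at h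
    exact h


open unitInterval

/-- Properly discontinuous in the sense of covering space theory (Hatcher's "covering space
action"), not Mathlib's compactness-based `ProperlyDiscontinuousSMul`. -/
def IsCoveringSpaceAction (Γ E : Type*) [Group Γ] [MulAction Γ E] [TopologicalSpace E] : Prop :=
  ∀ e : E, ∃ U : Set E, IsOpen U ∧ e ∈ U ∧ ∀ γ : Γ, γ ≠ 1 → Disjoint ((fun y : E => γ • y) '' U) U

section CoveringSpaceAction

variable {Γ E : Type*} [Group Γ] [MulAction Γ E]

theorem quot_mk_eq_iff_mem_orbit {a b : E} :
    Quot.mk (fun a b : E => ∃ γ : Γ, γ • a = b) a = Quot.mk _ b ↔ a ∈ MulAction.orbit Γ b := by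
  have hequiv : Equivalence fun a b : E => ∃ γ : Γ, γ • a = b :=
    ⟨fun a => ⟨1, one_smul Γ a⟩, fun ⟨γ, h⟩ => ⟨γ⁻¹, by rw [← h, inv_smul_smul]⟩,
      fun ⟨γ, h⟩ ⟨γ', h'⟩ => ⟨γ' * γ, by rw [mul_smul, h, h']⟩⟩
  constructor
  · intro h
    obtain ⟨γ, hγ⟩ := hequiv.eqvGen_iff.mp (Quot.eqvGen_exact h)
    exact ⟨γ⁻¹, hγ ▸ inv_smul_smul γ a⟩
  · rintro ⟨γ, rfl⟩
    exact (Quot.sound ⟨γ, rfl⟩).symm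

variable [TopologicalSpace E]

theorem IsCoveringSpaceAction.prod {F : Type*} [TopologicalSpace F] [MulAction Γ F]
    (h : IsCoveringSpaceAction Γ E) : IsCoveringSpaceAction Γ (E × F) := by
  rintro ⟨e, _⟩
  obtain ⟨U, hU, heU, hdisj⟩ := h e
  refine ⟨U ×ˢ Set.univ, hU.prod isOpen_univ, ⟨heU, trivial⟩, fun γ hγ => ?_⟩
  refine Set.disjoint_left.mpr ?_
  rintro _ ⟨w, ⟨hw, -⟩, rfl⟩ ⟨hγw, -⟩
  exact Set.disjoint_left.mp (hdisj γ hγ) ⟨w.1, hw, rfl⟩ hγw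

theorem IsCoveringSpaceAction.isQuotientCoveringMap [ContinuousConstSMul Γ E]
    (h : IsCoveringSpaceAction Γ E) :
    IsQuotientCoveringMap (Quot.mk fun a b : E => ∃ γ : Γ, γ • a = b) Γ where
  toIsQuotientMap := isQuotientMap_quot_mk
  apply_eq_iff_mem_orbit := quot_mk_eq_iff_mem_orbit
  disjoint e := by
    obtain ⟨U, hU, heU, hdisj⟩ := h e
    exact ⟨U, hU.mem_nhds heU, fun γ hγ => by_contra fun hne =>
      Set.not_disjoint_iff_nonempty_inter.mpr hγ (hdisj γ hne)⟩

end CoveringSpaceAction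

section Bundle

variable {X Γ G : Type*} [Group Γ] [MulAction Γ X] [Group G] (φ : Γ →* G)
variable [TopologicalSpace X] [TopologicalSpace G] [IsTopologicalGroup G]

/-- With `Γ` acting on `G` through `φ`, `BundleRel X φ` is by definition the orbit relation of the
product action on `X × G`. -/
theorem isQuotientCoveringMap_bundleMk [ContinuousConstSMul Γ X] (hΓ : IsCoveringSpaceAction Γ X) :
    letI := MulAction.compHom G φ
    IsQuotientCoveringMap (Quot.mk (BundleRel X φ)) Γ :=
  letI := MulAction.compHom G φ
  haveI : ContinuousConstSMul Γ G := ⟨fun γ => continuous_const_mul (φ γ)⟩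
  (hΓ.prod (F := G)).isQuotientCoveringMap

theorem mem_pathComponentSubgroup_of_joined_mul {g a : G} (h : Joined a (g * a)) :
    g ∈ pathComponentSubgroup G := by
  have : Joined 1 g := by simpa using h.map' (continuous_mul_const a⁻¹)
  exact this

theorem exists_loop_lift_of_loop [ContinuousConstSMul Γ X] (hΓ : IsCoveringSpaceAction Γ X)
    (hφ : Function.Injective ((QuotientGroup.mk' (pathComponentSubgroup G)).comp φ))
    (β : C(I, BundleTotal X φ)) (hβ : β 0 = β 1) :
    ∃ (a : X) (x : Path a a), ∀ t, BundleProj X φ (β t) = Quot.mk _ (x t) := by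
  let := MulAction.compHom G φ
  have cov := isQuotientCoveringMap_bundleMk φ hΓ
  obtain ⟨e, he⟩ := Quot.exists_rep (β 0)
  obtain ⟨π, hπ, -⟩ := cov.isCoveringMap.exists_path_lifts β e he.symm
  have hπt : ∀ t, Quot.mk _ (π t) = β t := congrFun hπ
  obtain ⟨γ, hγ : γ • π 1 = π 0⟩ : π 0 ∈ MulAction.orbit Γ (π 1) :=
    cov.apply_eq_iff_mem_orbit.mp (by rw [hπt, hπt, hβ])
  have hγ1 : γ = 1 := by
    have hsnd : φ γ * (π 1).2 = (π 0).2 := congrArg Prod.snd hγ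
    have hjoined : Joined (π 1).2 (φ γ * (π 1).2) :=
      hsnd ▸ Joined.symm ⟨⟨ContinuousMap.snd.comp π, rfl, rfl⟩⟩
    refine (injective_iff_map_eq_one _).mp hφ γ ?_
    simpa [QuotientGroup.eq_one_iff] using mem_pathComponentSubgroup_of_joined_mul hjoined
  have hloop : π 1 = π 0 := by rw [← hγ, hγ1, one_smul]
  exact ⟨(π 0).1, ⟨ContinuousMap.fst.comp π, by simp, by simp [hloop]⟩,
    fun t => congrArg (BundleProj X φ) (hπt t).symm⟩

end Bundle

section CircleLoop

open Real

noncomputable def circleLoop : C(I, Circle) :=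
  Circle.exp.comp ⟨fun t => 2 * π * t, by fun_prop⟩

@[simp] theorem circleLoop_zero : circleLoop 0 = 1 := by
  simp [circleLoop]

@[simp] theorem circleLoop_one : circleLoop 1 = 1 := by
  simp [circleLoop]

theorem circleLoop_surjective : Function.Surjective circleLoop := by
  intro z
  obtain ⟨θ, rfl⟩ := Circle.exp_surjective z
  obtain ⟨y, ⟨hy0, hy1⟩, hy⟩ := Circle.periodic_exp.exists_mem_Ico₀ two_pi_pos θ
  refine ⟨⟨y / (2 * π), by positivity, (div_le_one two_pi_pos).mpr hy1.le⟩, ?_⟩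
  simp [circleLoop, mul_div_cancel₀ y two_pi_pos.ne', hy]

theorem factorsThrough_circleLoop {Y : Type*} {g : I → Y} (hg : g 0 = g 1) :
    Function.FactorsThrough g circleLoop := by
  intro s t hst
  obtain ⟨m, hm⟩ := Circle.exp_eq_exp.mp hst
  have hm' : (s : ℝ) = t + m := by
    have := two_pi_pos
    simp only [ContinuousMap.coe_mk] at hm
    nlinarith
  have := nonneg s; have := le_one s; have := nonneg t; have := le_one t
  have hm_le : m ≤ 1 := by exact_mod_cast (show (m : ℝ) ≤ 1 by linarith)
  have hm_ge : -1 ≤ m := by exact_mod_cast (show (-1 : ℝ) ≤ m by linarith)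
  interval_cases m
  · obtain rfl : s = 0 := by ext; push_cast at hm' ⊢; linarith
    obtain rfl : t = 1 := by ext; push_cast at hm' ⊢; linarith
    exact hg
  · exact congrArg g (Subtype.ext (by simpa using hm'))
  · obtain rfl : s = 1 := by ext; push_cast at hm' ⊢; linarith
    obtain rfl : t = 0 := by ext; push_cast at hm' ⊢; linarith
    exact hg.symm

theorem ContinuousMap.nullhomotopic_of_homotopicRel_comp_circleLoop {Y : Type*}
    [TopologicalSpace Y] {f : C(Circle, Y)} {y : Y}
    (h : (f.comp circleLoop).HomotopicRel (ContinuousMap.const I y) {0, 1}) : f.Nullhomotopic := by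
  obtain ⟨F⟩ := h
  let Q : C(I × I, I × Circle) := (ContinuousMap.id I).prodMap circleLoop
  have hQ : Topology.IsQuotientMap Q :=
    .of_surjective_continuous (Function.surjective_id.prodMap circleLoop_surjective) Q.continuous
  have hF : Function.FactorsThrough F.toContinuousMap Q := by
    rintro ⟨u, s⟩ ⟨v, t⟩ hst
    obtain ⟨rfl, hst⟩ := Prod.ext_iff.mp hst
    refine factorsThrough_circleLoop (g := fun s => F (u, s)) ?_ hst
    simp [F.eq_fst u (show (0 : I) ∈ ({0, 1} : Set I) by simp),
      F.eq_fst u (show (1 : I) ∈ ({0, 1} : Set I) by simp)]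
  have hK (u s : I) : hQ.lift F.toContinuousMap hF (u, circleLoop s) = F (u, s) :=
    DFunLike.congr_fun (hQ.lift_comp F.toContinuousMap hF) (u, s)
  refine ⟨y, ⟨{ toContinuousMap := hQ.lift F.toContinuousMap hF
                map_zero_left := ?_
                map_one_left := ?_ }⟩⟩
  all_goals
    intro z
    obtain ⟨s, rfl⟩ := circleLoop_surjective z
    simp [hK]

theorem ContinuousMap.nullhomotopic_of_comp_circleLoop_eq {X Y : Type*} [TopologicalSpace X]
    [SimplyConnectedSpace X] [TopologicalSpace Y] {f : C(Circle, Y)} (q : C(X, Y)) {a : X}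
    (x : Path a a) (h : ∀ t, f (circleLoop t) = q (x t)) : f.Nullhomotopic := by
  apply nullhomotopic_of_homotopicRel_comp_circleLoop (y := q a)
  have hf : f.comp circleLoop = (x.map q.continuous).toContinuousMap := by
    ext t
    exact h t
  rw [hf]
  exact (SimplyConnectedSpace.paths_homotopic x (Path.refl a)).map q

end CircleLoop

theorem exists_lift_of_pullback_homeomorph_prod {B E F Y : Type*} [TopologicalSpace B]
    [TopologicalSpace E] [TopologicalSpace F] [Nonempty F] {p : E → Y} {α : B → Y}
    (Φ : {z : B × E // p z.2 = α z.1} ≃ₜ B × F) (hΦ : ∀ z, (Φ z).1 = (z : B × E).1) :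
    ∃ s : C(B, E), ∀ b, p (s b) = α b := by
  let f₀ : F := Classical.arbitrary F
  refine ⟨⟨fun b => (Φ.symm (b, f₀)).1.2, by fun_prop⟩, fun b => ?_⟩
  have hb : (Φ.symm (b, f₀)).1.1 = b := by rw [← hΦ, Φ.apply_symm_apply]
  simpa [hb] using (Φ.symm (b, f₀)).2

theorem bundleTotal_incompressible_general
    (X : Type*) [TopologicalSpace X] [SimplyConnectedSpace X]
    (Γ : Type*) [Group Γ] [MulAction Γ X]
    (hΓcont : ∀ γ : Γ, Continuous fun x : X => γ • x)
    (hΓpd : ∀ x : X, ∃ U : Set X, IsOpen U ∧ x ∈ U ∧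
      ∀ γ : Γ, γ ≠ 1 → Disjoint ((fun y : X => γ • y) '' U) U)
    (G : Type*) [Group G] [TopologicalSpace G] [IsTopologicalGroup G] (φ : Γ →* G)
    (hφ : Function.Injective ((QuotientGroup.mk' (pathComponentSubgroup G)).comp φ)) :
    ∀ α : C(Circle, GammaQuot X Γ), ¬ α.Nullhomotopic →
      ¬ ∃ Φ : {z : Circle × BundleTotal X φ // BundleProj X φ z.2 = α z.1} ≃ₜ Circle × G,
          (∀ z : {z : Circle × BundleTotal X φ // BundleProj X φ z.2 = α z.1},
            (Φ z).1 = (z : Circle × BundleTotal X φ).1) ∧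
          ∀ (a b : {z : Circle × BundleTotal X φ // BundleProj X φ z.2 = α z.1}) (g : G),
            (b : Circle × BundleTotal X φ) =
                ((a : Circle × BundleTotal X φ).1,
                  BundleAct φ (a : Circle × BundleTotal X φ).2 g) →
              Φ b = ((Φ a).1, (Φ a).2 * g) := by
  rintro α hα ⟨Φ, hΦ, -⟩
  have : ContinuousConstSMul Γ X := ⟨hΓcont⟩
  obtain ⟨s, hs⟩ := exists_lift_of_pullback_homeomorph_prod Φ hΦ
  obtain ⟨a, x, hx⟩ :=
    exists_loop_lift_of_loop φ hΓpd hφ (s.comp circleLoop) (by simp)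
  exact hα (ContinuousMap.nullhomotopic_of_comp_circleLoop_eq ⟨_, continuous_quot_mk⟩ x
    fun t => (hs _).symm.trans (hx t))

/-- Let `X` be a connected, simply connected, Hausdorff, locally
path-connected space, let a discrete group `Γ` act on `X` freely and properly
discontinuously (by homeomorphisms), let `G` be a compact Hausdorff topological group and
`φ : Γ → G` a homomorphism whose composition with `G → π₀(G) = G/G_a` is injective. Then
the principal `G`-bundle `E = Γ\(X × G)` over `Y = Γ\X` is incompressible: for every
non-nullhomotopic loop `α : S¹ → Y`, the pullback of `E` along `α` is a non-trivial
principal `G`-bundle over `S¹` (i.e. it admits no `G`-equivariant homeomorphism onto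
`S¹ × G` commuting with the projections to `S¹`). -/
theorem bundleTotal_incompressible
    (X : Type*) [TopologicalSpace X] [ConnectedSpace X] [SimplyConnectedSpace X] [T2Space X]
    [LocallyPathConnectedSpace X]
    (Γ : Type*) [Group Γ] [MulAction Γ X]
    (hΓcont : ∀ γ : Γ, Continuous fun x : X => γ • x)
    (hΓfree : ∀ (γ : Γ) (x : X), γ • x = x → γ = 1)
    (hΓpd : ∀ x : X, ∃ U : Set X, IsOpen U ∧ x ∈ U ∧
      ∀ γ : Γ, γ ≠ 1 → Disjoint ((fun y : X => γ • y) '' U) U)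
    (G : Type*) [Group G] [TopologicalSpace G] [IsTopologicalGroup G] [CompactSpace G]
    [T2Space G] (φ : Γ →* G)
    (hφ : Function.Injective ((QuotientGroup.mk' (pathComponentSubgroup G)).comp φ)) :
    ∀ α : C(Circle, GammaQuot X Γ), ¬ α.Nullhomotopic →
      ¬ ∃ Φ : {z : Circle × BundleTotal X φ // BundleProj X φ z.2 = α z.1} ≃ₜ Circle × G,
          (∀ z : {z : Circle × BundleTotal X φ // BundleProj X φ z.2 = α z.1},
            (Φ z).1 = (z : Circle × BundleTotal X φ).1) ∧
          ∀ (a b : {z : Circle × BundleTotal X φ // BundleProj X φ z.2 = α z.1}) (g : G),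
            (b : Circle × BundleTotal X φ) =
                ((a : Circle × BundleTotal X φ).1,
                  BundleAct φ (a : Circle × BundleTotal X φ).2 g) →
              Φ b = ((Φ a).1, (Φ a).2 * g) :=
  bundleTotal_incompressible_general X Γ hΓcont hΓpd G φ hφ
end

section
/- Let G be a locally compact Hausdorff group acting freely, properly and continuously on a locally compact Hausdorff space M, and let H be an open subgroup of G. Then every point p ∈ M has an open neighborhood V such that the set V.V = {g ∈ G : Vg ∩ V ≠ ∅} is contained in H. -/
/-! A proper map is closed, so the image of `(G \ H) × M` under `(g, x) ↦ (x g, x)` is closed in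
`M × M`. By freeness it misses `(p, p)`, and any product neighbourhood `V × V` of `(p, p)` avoiding
it satisfies `V.V ⊆ H`. -/

open Set

theorem exists_isOpen_transporter_subset_of_isClosedMap {G M : Type*} [TopologicalSpace G]
    [TopologicalSpace M] {ρ : M → G → M} (hρ : IsClosedMap fun q : G × M => (ρ q.2 q.1, q.2))
    {U : Set G} (hU : IsOpen U) {p : M} (hstab : ∀ g, ρ p g = p → g ∈ U) :
    ∃ V : Set M, IsOpen V ∧ p ∈ V ∧ {g : G | ∃ v ∈ V, ρ v g ∈ V} ⊆ U := by
  set F := (fun q : G × M => (ρ q.2 q.1, q.2)) '' (Uᶜ ×ˢ univ)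
  have hF : IsClosed F := hρ _ (hU.isClosed_compl.prod isClosed_univ)
  have hpF : (p, p) ∉ F := by
    rintro ⟨⟨g, x⟩, ⟨hg, -⟩, hgx⟩
    obtain ⟨hxg, rfl⟩ := Prod.ext_iff.mp hgx
    exact hg (hstab g hxg)
  obtain ⟨V₁, V₂, hV₁, hV₂, hpV₁, hpV₂, hV⟩ := isOpen_prod_iff.mp hF.isOpen_compl p p hpF
  refine ⟨V₁ ∩ V₂, hV₁.inter hV₂, ⟨hpV₁, hpV₂⟩, ?_⟩
  rintro g ⟨v, hv, hvg⟩
  by_contra hg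
  exact hV ⟨hvg.1, hv.2⟩ ⟨(g, v), ⟨hg, mem_univ v⟩, rfl⟩

theorem exists_nhd_transporter_subset_open_subgroup_general
    (G : Type*) [Group G] [TopologicalSpace G]
    (M : Type*) [TopologicalSpace M]
    (ρ : M → G → M)
    (hfree : ∀ x g, ρ x g = x → g = 1)
    (hproper : IsProperMap fun p : G × M => (ρ p.2 p.1, p.2))
    (H : Subgroup G) (hH : IsOpen (H : Set G)) (p : M) :
    ∃ V : Set M, IsOpen V ∧ p ∈ V ∧ {g : G | ∃ v ∈ V, ρ v g ∈ V} ⊆ (H : Set G) :=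
  exists_isOpen_transporter_subset_of_isClosedMap hproper.isClosedMap hH
    fun g hg => hfree p g hg ▸ H.one_mem

/-- Let a locally compact Hausdorff group `G` act freely, properly and
continuously on a locally compact Hausdorff space `M` (on the right), and let `H` be an open
subgroup of `G`. Then every point `p ∈ M` has an open neighbourhood `V` such that
`V.V = {g ∈ G : Vg ∩ V ≠ ∅}` is contained in `H`. -/
theorem exists_nhd_transporter_subset_open_subgroup
    (G : Type*) [Group G] [TopologicalSpace G] [IsTopologicalGroup G] [LocallyCompactSpace G]
    [T2Space G]
    (M : Type*) [TopologicalSpace M] [LocallyCompactSpace M] [T2Space M]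
    (ρ : M → G → M) (hcont : Continuous fun p : M × G => ρ p.1 p.2)
    (hone : ∀ x, ρ x 1 = x) (hmul : ∀ x g h, ρ (ρ x g) h = ρ x (g * h))
    (hfree : ∀ x g, ρ x g = x → g = 1)
    (hproper : IsProperMap fun p : G × M => (ρ p.2 p.1, p.2))
    (H : Subgroup G) (hH : IsOpen (H : Set G)) (p : M) :
    ∃ V : Set M, IsOpen V ∧ p ∈ V ∧ {g : G | ∃ v ∈ V, ρ v g ∈ V} ⊆ (H : Set G) :=
  exists_nhd_transporter_subset_open_subgroup_general G M ρ hfree hproper H hH p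
end

section
/- Let G be a locally compact Hausdorff group acting freely, properly and continuously on a locally compact Hausdorff space M, and let H be an open subgroup of G. Then the canonical map M/H → M/G between the orbit spaces is a local homeomorphism. -/
/-- The orbit equivalence relation of a right action `ρ` of `G` on `X`. -/
def OrbitRel {X G : Type*} (ρ : X → G → X) : X → X → Prop := fun a b => ∃ g : G, ρ a g = b

/-- The orbit space `X/G` of a right action `ρ` of `G` on `X`, with the quotient topology. -/
def OrbitSpace {X G : Type*} (ρ : X → G → X) : Type _ := Quot (OrbitRel ρ)

instance OrbitSpace.instTopologicalSpace {X G : Type*} [TopologicalSpace X] (ρ : X → G → X) :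
    TopologicalSpace (OrbitSpace ρ) :=
  inferInstanceAs (TopologicalSpace (Quot _))
/-- The orbit relation of the restricted action of a subgroup `H ≤ G` on `X`. -/
def SubOrbitRel {X G : Type*} [Group G] (ρ : X → G → X) (H : Subgroup G) : X → X → Prop :=
  fun a b => ∃ h : H, ρ a (h : G) = b

/-- The orbit space `X/H` for the restricted action of a subgroup `H ≤ G`. -/
def SubOrbitSpace {X G : Type*} [Group G] (ρ : X → G → X) (H : Subgroup G) : Type _ :=
  Quot (SubOrbitRel ρ H)

instance SubOrbitSpace.instTopologicalSpace {X G : Type*} [Group G] [TopologicalSpace X]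
    (ρ : X → G → X) (H : Subgroup G) : TopologicalSpace (SubOrbitSpace ρ H) :=
  inferInstanceAs (TopologicalSpace (Quot _))

/-- The canonical map `X/H → X/G` sending the `H`-orbit of `x` to its `G`-orbit. -/
def subOrbitMap {X G : Type*} [Group G] (ρ : X → G → X) (H : Subgroup G) :
    SubOrbitSpace ρ H → OrbitSpace ρ :=
  Quot.lift (Quot.mk (OrbitRel ρ)) (by rintro a b ⟨h, rfl⟩; exact Quot.sound ⟨h, rfl⟩)

/-!
Saturations in `M` are unions of translates, so both quotient maps are open, hence so is the
continuous map `M/H → M/G`. By properness the image of `(G ∖ H) × M` under `(g, x) ↦ (x g, x)`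
is closed, and by freeness it misses `(x, x)`; a product neighbourhood `U × U` of `(x, x)` in
its complement gives `U g ∩ U = ∅` for `g ∉ H`, so `M/H → M/G` is injective on the image of `U`.
-/

open Set Topology

theorem IsLocalHomeomorph.of_isLocallyInjective {X Y : Type*} [TopologicalSpace X]
    [TopologicalSpace Y] {f : X → Y} (hc : Continuous f) (ho : IsOpenMap f)
    (hi : IsLocallyInjective f) : IsLocalHomeomorph f := by
  rw [isLocalHomeomorph_iff_isOpenEmbedding_restrict]
  intro x
  obtain ⟨U, hU, hxU, hinj⟩ := hi x
  exact ⟨U, hU.mem_nhds hxU, .of_continuous_injective_isOpenMap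
    (hc.comp continuous_subtype_val) hinj.injective (ho.comp hU.isOpenMap_subtype_val)⟩

theorem isOpenMap_quot_mk_of_equivalence {X ι : Type*} [TopologicalSpace X]
    {r : X → X → Prop} (hr : Equivalence r) (f : ι → X → X) (hf : ∀ i, Continuous (f i))
    (hrel : ∀ a b, r a b ↔ ∃ i, f i a = b) : IsOpenMap (Quot.mk r) := by
  intro W hW
  have hsat : Quot.mk r ⁻¹' (Quot.mk r '' W) = ⋃ i, f i ⁻¹' W := by
    ext x
    simp only [mem_preimage, mem_image, mem_iUnion, hr.quot_mk_eq_iff]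
    constructor
    · rintro ⟨w, hw, hwx⟩
      obtain ⟨i, rfl⟩ := (hrel x w).mp (hr.symm hwx)
      exact ⟨i, hw⟩
    · rintro ⟨i, hi⟩
      exact ⟨f i x, hi, hr.symm ((hrel x _).mpr ⟨i, rfl⟩)⟩
  change IsOpen (Quot.mk r ⁻¹' (Quot.mk r '' W))
  rw [hsat]
  exact isOpen_iUnion fun i => hW.preimage (hf i)

theorem exists_isOpen_forall_act_notMem {X G : Type*} [TopologicalSpace X] [TopologicalSpace G]
    {ρ : X → G → X} (hproper : IsProperMap fun p : G × X => (ρ p.2 p.1, p.2)) {C : Set G}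
    (hC : IsClosed C) {x : X} (hx : ∀ g ∈ C, ρ x g ≠ x) :
    ∃ U, IsOpen U ∧ x ∈ U ∧ ∀ u ∈ U, ∀ g ∈ C, ρ u g ∉ U := by
  set F := fun p : G × X => (ρ p.2 p.1, p.2)
  have hclosed : IsClosed (F '' (C ×ˢ univ)) := hproper.isClosedMap _ (hC.prod isClosed_univ)
  have hxx : (x, x) ∉ F '' (C ×ˢ univ) := by
    rintro ⟨⟨g, y⟩, ⟨hg, -⟩, hgy⟩
    obtain ⟨hyg, rfl⟩ := Prod.ext_iff.mp hgy
    exact hx g hg hyg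
  have hnhds : (F '' (C ×ˢ univ))ᶜ ∈ 𝓝 x ×ˢ 𝓝 x :=
    nhds_prod_eq (x := x) (y := x) ▸ hclosed.isOpen_compl.mem_nhds hxx
  obtain ⟨V, hV, hVsub⟩ := Filter.mem_prod_self_iff.mp hnhds
  obtain ⟨U, hUV, hU, hxU⟩ := mem_nhds_iff.mp hV
  exact ⟨U, hU, hxU, fun u hu g hg hgu =>
    hVsub ⟨hUV hgu, hUV hu⟩ ⟨(g, u), ⟨hg, trivial⟩, rfl⟩⟩

section Orbits

variable {X G : Type*} [Group G] {ρ : X → G → X}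

theorem OrbitRel.equivalence (hone : ∀ x, ρ x 1 = x)
    (hmul : ∀ x g h, ρ (ρ x g) h = ρ x (g * h)) : Equivalence (OrbitRel ρ) where
  refl x := ⟨1, hone x⟩
  symm := by
    rintro x _ ⟨g, rfl⟩
    exact ⟨g⁻¹, by rw [hmul, mul_inv_cancel, hone]⟩
  trans := by
    rintro x _ _ ⟨g, rfl⟩ ⟨g', rfl⟩
    exact ⟨g * g', (hmul _ _ _).symm⟩

theorem SubOrbitRel.equivalence (hone : ∀ x, ρ x 1 = x)
    (hmul : ∀ x g h, ρ (ρ x g) h = ρ x (g * h)) (H : Subgroup G) :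
    Equivalence (SubOrbitRel ρ H) where
  refl x := ⟨1, hone x⟩
  symm := by
    rintro x _ ⟨h, rfl⟩
    exact ⟨h⁻¹, by rw [hmul, Subgroup.coe_inv, mul_inv_cancel, hone]⟩
  trans := by
    rintro x _ _ ⟨h, rfl⟩ ⟨h', rfl⟩
    exact ⟨h * h', (hmul _ _ _).symm⟩

theorem injOn_subOrbitMap_image (hone : ∀ x, ρ x 1 = x)
    (hmul : ∀ x g h, ρ (ρ x g) h = ρ x (g * h)) {H : Subgroup G} {U : Set X}
    (hU : ∀ u ∈ U, ∀ g, ρ u g ∈ U → g ∈ H) :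
    (Quot.mk (SubOrbitRel ρ H) '' U).InjOn (subOrbitMap ρ H) := by
  rintro _ ⟨u, hu, rfl⟩ _ ⟨v, hv, rfl⟩ huv
  obtain ⟨g, rfl⟩ := ((OrbitRel.equivalence hone hmul).quot_mk_eq_iff u v).mp huv
  exact Quot.sound ⟨⟨g, hU u hu g hv⟩, rfl⟩

variable [TopologicalSpace X]

theorem isOpenMap_orbitSpace_mk (hone : ∀ x, ρ x 1 = x)
    (hmul : ∀ x g h, ρ (ρ x g) h = ρ x (g * h)) (hρ : ∀ g, Continuous fun x => ρ x g) :
    IsOpenMap (Quot.mk (OrbitRel ρ)) :=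
  isOpenMap_quot_mk_of_equivalence (OrbitRel.equivalence hone hmul) (fun g x => ρ x g) hρ
    fun _ _ => Iff.rfl

theorem isOpenMap_subOrbitSpace_mk (hone : ∀ x, ρ x 1 = x)
    (hmul : ∀ x g h, ρ (ρ x g) h = ρ x (g * h)) (hρ : ∀ g, Continuous fun x => ρ x g)
    (H : Subgroup G) : IsOpenMap (Quot.mk (SubOrbitRel ρ H)) :=
  isOpenMap_quot_mk_of_equivalence (SubOrbitRel.equivalence hone hmul H)
    (fun (h : H) x => ρ x h) (fun h => hρ h) fun _ _ => Iff.rfl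

theorem isOpenMap_subOrbitMap (hone : ∀ x, ρ x 1 = x)
    (hmul : ∀ x g h, ρ (ρ x g) h = ρ x (g * h)) (hρ : ∀ g, Continuous fun x => ρ x g)
    (H : Subgroup G) : IsOpenMap (subOrbitMap ρ H) :=
  IsOpenMap.of_comp continuous_quot_mk Quot.mk_surjective (isOpenMap_orbitSpace_mk hone hmul hρ)

theorem isLocallyInjective_subOrbitMap [TopologicalSpace G] (hone : ∀ x, ρ x 1 = x)
    (hmul : ∀ x g h, ρ (ρ x g) h = ρ x (g * h)) (hρ : ∀ g, Continuous fun x => ρ x g)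
    (hfree : ∀ x g, ρ x g = x → g = 1)
    (hproper : IsProperMap fun p : G × X => (ρ p.2 p.1, p.2))
    {H : Subgroup G} (hH : IsOpen (H : Set G)) : IsLocallyInjective (subOrbitMap ρ H) := by
  intro p
  obtain ⟨x, rfl⟩ := Quot.mk_surjective p
  obtain ⟨U, hU, hxU, hUC⟩ := exists_isOpen_forall_act_notMem hproper hH.isClosed_compl
    fun g hg hgx => hg (hfree x g hgx ▸ H.one_mem)
  exact ⟨_, isOpenMap_subOrbitSpace_mk hone hmul hρ H U hU, ⟨x, hxU, rfl⟩,
    injOn_subOrbitMap_image hone hmul fun u hu g hgu => not_not.mp fun hg => hUC u hu g hg hgu⟩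

end Orbits

theorem isLocalHomeomorph_subOrbitMap_general
    (G : Type*) [Group G] [TopologicalSpace G]
    (M : Type*) [TopologicalSpace M]
    (ρ : M → G → M) (hcont : Continuous fun p : M × G => ρ p.1 p.2)
    (hone : ∀ x, ρ x 1 = x) (hmul : ∀ x g h, ρ (ρ x g) h = ρ x (g * h))
    (hfree : ∀ x g, ρ x g = x → g = 1)
    (hproper : IsProperMap fun p : G × M => (ρ p.2 p.1, p.2))
    (H : Subgroup G) (hH : IsOpen (H : Set G)) :
    IsLocalHomeomorph (subOrbitMap ρ H) := by
  have hρ : ∀ g, Continuous fun x => ρ x g := fun g =>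
    hcont.comp (continuous_id.prodMk continuous_const)
  exact .of_isLocallyInjective (continuous_quot_lift _ continuous_quot_mk)
    (isOpenMap_subOrbitMap hone hmul hρ H)
    (isLocallyInjective_subOrbitMap hone hmul hρ hfree hproper hH)

/-- Let a locally compact Hausdorff group `G` act freely, properly and
continuously on a locally compact Hausdorff space `M` (on the right), and let `H` be an open
subgroup of `G`. Then the canonical map `M/H → M/G` between the orbit spaces is a local
homeomorphism. -/
theorem isLocalHomeomorph_subOrbitMap
    (G : Type*) [Group G] [TopologicalSpace G] [IsTopologicalGroup G] [LocallyCompactSpace G]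
    [T2Space G]
    (M : Type*) [TopologicalSpace M] [LocallyCompactSpace M] [T2Space M]
    (ρ : M → G → M) (hcont : Continuous fun p : M × G => ρ p.1 p.2)
    (hone : ∀ x, ρ x 1 = x) (hmul : ∀ x g h, ρ (ρ x g) h = ρ x (g * h))
    (hfree : ∀ x g, ρ x g = x → g = 1)
    (hproper : IsProperMap fun p : G × M => (ρ p.2 p.1, p.2))
    (H : Subgroup G) (hH : IsOpen (H : Set G)) :
    IsLocalHomeomorph (subOrbitMap ρ H) :=
  isLocalHomeomorph_subOrbitMap_general G M ρ hcont hone hmul hfree hproper H hH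
end

section
/- Let H be a locally compact Hausdorff group acting freely, properly and continuously on a locally compact Hausdorff space X, and let N be a compact normal subgroup of H. Then the induced action of H on the orbit space X/N, given by [x]·h := [xh], is proper. -/
/-- The induced right action of `H` on the orbit space `X/N`, `[x]·h := [xh]`, for a normal
subgroup `N` of `H`. -/
def quotActN {X H : Type*} [Group H] (ρ : X → H → X)
    (hmul : ∀ x g g', ρ (ρ x g) g' = ρ x (g * g')) (N : Subgroup H) [N.Normal]
    (q : Quot (SubOrbitRel ρ N)) (h : H) : Quot (SubOrbitRel ρ N) :=
  Quot.lift (fun x => Quot.mk (SubOrbitRel ρ N) (ρ x h))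
    (by
      rintro a b ⟨n, rfl⟩
      apply Quot.sound
      refine ⟨⟨h⁻¹ * (n : H) * h, Subgroup.Normal.conj_mem' ‹N.Normal› _ n.2 h⟩, ?_⟩
      show ρ (ρ a h) (h⁻¹ * (n : H) * h) = ρ (ρ a (n : H)) h
      rw [hmul, hmul]
      congr 1
      group) q

/-!
Since `N` is compact, the quotient map `π : X → X/N` is proper: the saturation of a closed set
`F` is the projection to `X` of the closed set `{(y, n) | y·n ∈ F} ⊆ X × N`, hence closed, and
the fibres of `π` are the compact orbits `x·N`. So `π⁻¹ K` and `π⁻¹ K'` are compact, and the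
set of `h` moving `K` into `K'` is the set of `h` moving `π⁻¹ K` into `π⁻¹ K'`, compact by
properness of the action on `X`.
-/

namespace SubOrbitSpace

variable {X G : Type*} [Group G] (ρ : X → G → X) (N : Subgroup G)

def mk : X → SubOrbitSpace ρ N := Quot.mk (SubOrbitRel ρ N)

variable {ρ}

theorem _root_.SubOrbitRel.equivalence_s14 (hone : ∀ x, ρ x 1 = x)
    (hmul : ∀ x g g', ρ (ρ x g) g' = ρ x (g * g')) : Equivalence (SubOrbitRel ρ N) where
  refl x := ⟨1, hone x⟩
  symm := by
    rintro x y ⟨n, rfl⟩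
    exact ⟨n⁻¹, by simp [hmul, hone]⟩
  trans := by
    rintro x y z ⟨n, rfl⟩ ⟨m, rfl⟩
    exact ⟨n * m, (hmul ..).symm⟩

theorem mk_eq_mk_iff (hone : ∀ x, ρ x 1 = x) (hmul : ∀ x g g', ρ (ρ x g) g' = ρ x (g * g'))
    {x y : X} : mk ρ N x = mk ρ N y ↔ SubOrbitRel ρ N x y :=
  (SubOrbitRel.equivalence_s14 N hone hmul).quot_mk_eq_iff x y

theorem preimage_image_mk (hone : ∀ x, ρ x 1 = x) (hmul : ∀ x g g', ρ (ρ x g) g' = ρ x (g * g'))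
    (s : Set X) : mk ρ N ⁻¹' (mk ρ N '' s) = {y | ∃ n : N, ρ y n ∈ s} := by
  ext y
  simp only [Set.mem_preimage, Set.mem_image, mk_eq_mk_iff N hone hmul]
  constructor
  · rintro ⟨x, hx, hxy⟩
    obtain ⟨n, rfl⟩ := (SubOrbitRel.equivalence_s14 N hone hmul).symm hxy
    exact ⟨n, hx⟩
  · rintro ⟨n, hn⟩
    exact ⟨ρ y n, hn, (SubOrbitRel.equivalence_s14 N hone hmul).symm ⟨n, rfl⟩⟩

theorem preimage_mk_singleton (hone : ∀ x, ρ x 1 = x)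
    (hmul : ∀ x g g', ρ (ρ x g) g' = ρ x (g * g')) (x : X) :
    mk ρ N ⁻¹' {mk ρ N x} = Set.range fun n : N => ρ x n := by
  ext y
  simp only [Set.mem_preimage, Set.mem_singleton_iff, mk_eq_mk_iff N hone hmul]
  exact ⟨(SubOrbitRel.equivalence_s14 N hone hmul).symm, (SubOrbitRel.equivalence_s14 N hone hmul).symm⟩

variable [TopologicalSpace X]

theorem isQuotientMap_mk : Topology.IsQuotientMap (mk ρ N) := isQuotientMap_quot_mk

variable [TopologicalSpace G]

theorem isClosedMap_mk (hcont : Continuous fun p : X × G => ρ p.1 p.2)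
    (hone : ∀ x, ρ x 1 = x) (hmul : ∀ x g g', ρ (ρ x g) g' = ρ x (g * g'))
    (hN : IsCompact (N : Set G)) : IsClosedMap (mk ρ N) := by
  intro F hF
  have : CompactSpace N := isCompact_iff_compactSpace.mp hN
  rw [← (isQuotientMap_mk N).isClosed_preimage, preimage_image_mk N hone hmul]
  have hsat : {y | ∃ n : N, ρ y n ∈ F} = Prod.fst '' {p : X × N | ρ p.1 p.2 ∈ F} := by
    ext y
    simp
  rw [hsat]
  exact isClosedMap_fst_of_compactSpace _
    (hF.preimage (hcont.comp (continuous_fst.prodMk (continuous_subtype_val.comp continuous_snd))))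

theorem isProperMap_mk (hcont : Continuous fun p : X × G => ρ p.1 p.2)
    (hone : ∀ x, ρ x 1 = x) (hmul : ∀ x g g', ρ (ρ x g) g' = ρ x (g * g'))
    (hN : IsCompact (N : Set G)) : IsProperMap (mk ρ N) := by
  refine isProperMap_iff_isClosedMap_and_compact_fibers.mpr
    ⟨(isQuotientMap_mk N).continuous, isClosedMap_mk N hcont hone hmul hN, ?_⟩
  rintro ⟨x⟩
  change IsCompact (mk ρ N ⁻¹' {mk ρ N x})
  rw [preimage_mk_singleton N hone hmul]
  have : CompactSpace N := isCompact_iff_compactSpace.mp hN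
  exact isCompact_range (hcont.comp (continuous_const.prodMk continuous_subtype_val))

end SubOrbitSpace

theorem setOf_quotActN_mem {X H : Type*} [Group H] (ρ : X → H → X)
    (hmul : ∀ x g g', ρ (ρ x g) g' = ρ x (g * g')) (N : Subgroup H) [N.Normal]
    (K K' : Set (SubOrbitSpace ρ N)) :
    {h : H | ∃ q ∈ K, quotActN ρ hmul N q h ∈ K'} =
      {h : H | ∃ x ∈ SubOrbitSpace.mk ρ N ⁻¹' K, ρ x h ∈ SubOrbitSpace.mk ρ N ⁻¹' K'} := by
  ext h
  constructor
  · rintro ⟨⟨x⟩, hx, hxh⟩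
    exact ⟨x, hx, hxh⟩
  · rintro ⟨x, hx, hxh⟩
    exact ⟨SubOrbitSpace.mk ρ N x, hx, hxh⟩

theorem quotActN_proper_general
    (H : Type*) [Group H] [TopologicalSpace H]
    (X : Type*) [TopologicalSpace X]
    (ρ : X → H → X) (hcont : Continuous fun p : X × H => ρ p.1 p.2)
    (hone : ∀ x, ρ x 1 = x) (hmul : ∀ x g g', ρ (ρ x g) g' = ρ x (g * g'))
    (hproper : ∀ K K' : Set X, IsCompact K → IsCompact K' →
      IsCompact {h : H | ∃ x ∈ K, ρ x h ∈ K'})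
    (N : Subgroup H) [N.Normal] (hN : IsCompact (N : Set H)) :
    ∀ K K' : Set (SubOrbitSpace ρ N), IsCompact K → IsCompact K' →
      IsCompact {h : H | ∃ q ∈ K, quotActN ρ hmul N q h ∈ K'} := by
  intro K K' hK hK'
  have hπ := SubOrbitSpace.isProperMap_mk N hcont hone hmul hN
  rw [setOf_quotActN_mem]
  exact hproper _ _ (hπ.isCompact_preimage hK) (hπ.isCompact_preimage hK')

/-- Let a locally compact Hausdorff group `H` act freely, properly and
continuously on a locally compact Hausdorff space `X` (on the right), properness meaning
that for all compact `K, K' ⊆ X` the set `{h ∈ H : Kh ∩ K' ≠ ∅}` is compact. Then for every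
compact normal subgroup `N` of `H`, the induced action `[x]·h := [xh]` of `H` on the orbit
space `X/N` is proper in the same sense. -/
theorem quotActN_proper
    (H : Type*) [Group H] [TopologicalSpace H] [IsTopologicalGroup H] [LocallyCompactSpace H]
    [T2Space H]
    (X : Type*) [TopologicalSpace X] [LocallyCompactSpace X] [T2Space X]
    (ρ : X → H → X) (hcont : Continuous fun p : X × H => ρ p.1 p.2)
    (hone : ∀ x, ρ x 1 = x) (hmul : ∀ x g g', ρ (ρ x g) g' = ρ x (g * g'))
    (hfree : ∀ x g, ρ x g = x → g = 1)
    (hproper : ∀ K K' : Set X, IsCompact K → IsCompact K' →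
      IsCompact {h : H | ∃ x ∈ K, ρ x h ∈ K'})
    (N : Subgroup H) [N.Normal] (hN : IsCompact (N : Set H)) :
    ∀ K K' : Set (SubOrbitSpace ρ N), IsCompact K → IsCompact K' →
      IsCompact {h : H | ∃ q ∈ K, quotActN ρ hmul N q h ∈ K'} :=
  quotActN_proper_general H X ρ hcont hone hmul hproper N hN
end
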